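/- arXiv:1605.08608 — 6 statements merged into one kernel-verified Lean document; each statement's English description precedes it below -/
import Mathlib

section
/- Let c ≠ 0, c_W = −24c², and define AT_H = {(h_{p,r}, (1±p)c) : p, r ∈ ℤ_{>0}} and AT_W = {(h_{p,r}, ((1−p²)/24)c_W) : p, r ∈ ℤ_{>0}}. Then for any (h, h_I) ∈ ℂ², setting h_W = h_I(h_I − 2c), one has (h, h_I) ∈ AT_H if and only if (h, h_W) ∈ AT_W. -/
/-- h_{p,r} = (1−p²)(c_L−2)/24 + p(p−1) + p(1−r)/2. -/
noncomputable def hpr (cL : ℂ) (p r : ℤ) : ℂ :=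
  (1 - (p : ℂ) ^ 2) * ((cL - 2) / 24) + (p : ℂ) * ((p : ℂ) - 1) + (p : ℂ) * ((1 - (r : ℂ)) / 2)

/-- Atypical weights for the twisted Heisenberg–Virasoro algebra:
AT_ℋ = {(h_{p,r}, (1±p)c) : p, r ∈ ℤ_{>0}}. -/
def ATH (cL c : ℂ) : Set (ℂ × ℂ) :=
  {x | ∃ p r : ℤ, 0 < p ∧ 0 < r ∧ x.1 = hpr cL p r ∧
        (x.2 = (1 + (p : ℂ)) * c ∨ x.2 = (1 - (p : ℂ)) * c)}

/-- Atypical weights for W(2,2): AT_W = {(h_{p,r}, ((1−p²)/24)c_W) : p, r ∈ ℤ_{>0}}. -/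
def ATW (cL cW : ℂ) : Set (ℂ × ℂ) :=
  {x | ∃ p r : ℤ, 0 < p ∧ 0 < r ∧ x.1 = hpr cL p r ∧ x.2 = ((1 - (p : ℂ) ^ 2) / 24) * cW}

/-- With c ≠ 0 and c_W = −24c²: (h, h_I) ∈ AT_ℋ iff (h, h_I(h_I − 2c)) ∈ AT_W. -/
theorem atypical_correspondence (cL c : ℂ) (hc : c ≠ 0) (cW : ℂ) (hcW : cW = -24 * c ^ 2)
    (h hI : ℂ) :
    (h, hI) ∈ ATH cL c ↔ (h, hI * (hI - 2 * c)) ∈ ATW cL cW := by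
  constructor
  · rintro ⟨p, r, hp, hr, hh, hpm⟩
    refine ⟨p, r, hp, hr, hh, ?_⟩
    rcases hpm with h2 | h2 <;> simp only at h2 <;> subst hcW <;> rw [h2] <;> ring
  · rintro ⟨p, r, hp, hr, hh, h2⟩
    simp only at h2 hh
    have key : (hI - (1 + (p : ℂ)) * c) * (hI - (1 - (p : ℂ)) * c) = 0 := by
      linear_combination h2 + ((1 - (p : ℂ) ^ 2) / 24) * hcW
    rcases mul_eq_zero.mp key with h3 | h3
    · exact ⟨p, r, hp, hr, hh, Or.inl (sub_eq_zero.mp h3)⟩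
    · exact ⟨p, r, hp, hr, hh, Or.inr (sub_eq_zero.mp h3)⟩
end

section
/- Let M be a module over the twisted Heisenberg–Virasoro Lie algebra ℋ with C_I acting as 0, C_{LI} acting as c ∈ ℂ, and let v ∈ M satisfy L(n)v = I(n)v = 0 for all n > 0, L(0)v = h·v, I(0)v = 2c·v. Then the vector w = I(−1)v satisfies L(n)w = I(n)w = 0 for all n > 0, i.e., w is a singular vector of weight h+1. -/
/-- Let M be a module over the twisted Heisenberg–Virasoro algebra ℋ with C_I acting as 0
and C_{LI} acting as c (given by operators L(n), I(n) and C_L satisfying the ℋ relations),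
and let v be a highest weight vector with L(0)v = h·v, I(0)v = 2c·v. Then w = I(−1)v is a
singular vector: L(n)w = I(n)w = 0 for all n > 0. -/
theorem singular_vector_I_neg_one
    {M : Type*} [AddCommGroup M] [Module ℂ M]
    (L I : ℤ → Module.End ℂ M) (CL : Module.End ℂ M) (c h : ℂ)
    (hLL : ∀ n m : ℤ, ⁅L n, L m⁆ =
      ((n - m : ℤ) : ℂ) • L (n + m) +
        (if n = -m then (((n : ℂ) ^ 3 - (n : ℂ)) / 12) • CL else 0))
    (hLI : ∀ n m : ℤ, ⁅L n, I m⁆ =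
      (-(m : ℂ)) • I (n + m) +
        (if n = -m then (-(((n : ℂ) ^ 2 + (n : ℂ)) * c)) • (1 : Module.End ℂ M) else 0))
    (hII : ∀ n m : ℤ, ⁅I n, I m⁆ = 0)
    (v : M)
    (hv : ∀ n : ℤ, 0 < n → L n v = 0 ∧ I n v = 0)
    (hL0 : L 0 v = h • v) (hI0 : I 0 v = (2 * c) • v) :
    ∀ n : ℤ, 0 < n → L n (I (-1) v) = 0 ∧ I n (I (-1) v) = 0 := by
  intro n hn
  have hLbr := congrArg (fun f : Module.End ℂ M => f v) (hLI n (-1))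
  have hIbr := congrArg (fun f : Module.End ℂ M => f v) (hII n (-1))
  simp only [Ring.lie_def, LinearMap.sub_apply, Module.End.mul_apply, LinearMap.add_apply,
    LinearMap.smul_apply, Module.End.one_apply, LinearMap.zero_apply] at hLbr hIbr
  constructor
  · rcases eq_or_ne n 1 with h1 | h1
    · subst h1
      rw [(hv 1 one_pos).1, map_zero, sub_zero] at hLbr
      norm_num [show (1:ℤ) + -1 = 0 from rfl, hI0] at hLbr
      rw [hLbr]
    · have hcond : ¬ (n = -(-1 : ℤ)) := by simpa using h1
      rw [if_neg hcond] at hLbr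
      rw [(hv n hn).1, map_zero, sub_zero] at hLbr
      have hn1 : 0 < n + -1 := by omega
      rw [hLbr, (hv _ hn1).2]
      simp
  · rw [sub_eq_zero] at hIbr
    rw [hIbr, (hv n hn).2, map_zero]
end

section
/- Let M be a module over ℋ with C_I acting as 0, C_{LI} acting as c ≠ 0, and let v ∈ M satisfy L(n)v = I(n)v = 0 for all n > 0, L(0)v = h·v, I(0)v = 0. Then the vector w = (L(−1) + (h/c)·I(−1))v satisfies L(n)w = I(n)w = 0 for all n > 0, i.e., w is a singular vector of weight h+1. -/
/-!
Move `L(n)` and `I(n)` (`n > 0`) past `L(-1)` and `I(-1)` with the commutation relations and use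
that `v` is killed by positive modes. At these indices every central term vanishes except the
`-2c` in `[L(1), I(-1)]`, so for `n ≥ 2` both components of `w` are killed outright, while for
`n = 1` the choice of coefficient `h/c` is exactly what cancels `L(1)w = 2h v - (h/c) 2c v`.
-/

theorem Module.End.apply_apply_eq_lie_apply_add {R M : Type*} [CommRing R] [AddCommGroup M]
    [Module R M] (f g : Module.End R M) (x : M) : f (g x) = ⁅f, g⁆ x + g (f x) := by
  rw [Ring.lie_def]
  exact (sub_add_cancel _ _).symm

namespace HeisenbergVirasoro

variable {M : Type*} [AddCommGroup M] [Module ℂ M] {L I : ℤ → Module.End ℂ M}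

theorem lie_L_L_neg_one {CL : Module.End ℂ M}
    (hLL : ∀ n m : ℤ, ⁅L n, L m⁆ =
      ((n - m : ℤ) : ℂ) • L (n + m) +
        (if n = -m then (((n : ℂ) ^ 3 - (n : ℂ)) / 12) • CL else 0))
    (n : ℤ) : ⁅L n, L (-1)⁆ = ((n : ℂ) + 1) • L (n - 1) := by
  rw [hLL, sub_neg_eq_add, ← sub_eq_add_neg]
  split_ifs with h
  · obtain rfl : n = 1 := by omega
    norm_num
  · push_cast
    rw [add_zero]

theorem lie_L_neg_one_I {c : ℂ}
    (hLI : ∀ n m : ℤ, ⁅L n, I m⁆ =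
      (-(m : ℂ)) • I (n + m) +
        (if n = -m then (-(((n : ℂ) ^ 2 + (n : ℂ)) * c)) • (1 : Module.End ℂ M) else 0))
    (m : ℤ) : ⁅L (-1), I m⁆ = (-(m : ℂ)) • I (m - 1) := by
  rw [hLI, neg_add_eq_sub]
  split_ifs <;> norm_num

theorem lie_I_L_neg_one {c : ℂ}
    (hLI : ∀ n m : ℤ, ⁅L n, I m⁆ =
      (-(m : ℂ)) • I (n + m) +
        (if n = -m then (-(((n : ℂ) ^ 2 + (n : ℂ)) * c)) • (1 : Module.End ℂ M) else 0))
    (m : ℤ) : ⁅I m, L (-1)⁆ = (m : ℂ) • I (m - 1) := by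
  rw [Ring.lie_def, ← neg_sub, ← Ring.lie_def, lie_L_neg_one_I hLI, neg_smul, neg_neg]

theorem lie_L_I_neg_one {c : ℂ}
    (hLI : ∀ n m : ℤ, ⁅L n, I m⁆ =
      (-(m : ℂ)) • I (n + m) +
        (if n = -m then (-(((n : ℂ) ^ 2 + (n : ℂ)) * c)) • (1 : Module.End ℂ M) else 0))
    (n : ℤ) :
    ⁅L n, I (-1)⁆ = I (n - 1) + if n = 1 then (-(2 * c)) • (1 : Module.End ℂ M) else 0 := by
  rw [hLI, ← sub_eq_add_neg, neg_neg]
  simp only [Int.cast_neg, Int.cast_one, neg_neg, one_smul]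
  split_ifs with h
  · subst h
    norm_num
  · rfl

end HeisenbergVirasoro

open HeisenbergVirasoro Module.End in
/-- Let M be an ℋ-module with C_I acting as 0 and C_{LI} acting as c ≠ 0, and let v be a
highest weight vector with L(0)v = h·v, I(0)v = 0. Then w = (L(−1) + (h/c)I(−1))v is a
singular vector: L(n)w = I(n)w = 0 for all n > 0. -/
theorem singular_vector_p_one_minus
    {M : Type*} [AddCommGroup M] [Module ℂ M]
    (L I : ℤ → Module.End ℂ M) (CL : Module.End ℂ M) (c h : ℂ) (hc : c ≠ 0)
    (hLL : ∀ n m : ℤ, ⁅L n, L m⁆ =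
      ((n - m : ℤ) : ℂ) • L (n + m) +
        (if n = -m then (((n : ℂ) ^ 3 - (n : ℂ)) / 12) • CL else 0))
    (hLI : ∀ n m : ℤ, ⁅L n, I m⁆ =
      (-(m : ℂ)) • I (n + m) +
        (if n = -m then (-(((n : ℂ) ^ 2 + (n : ℂ)) * c)) • (1 : Module.End ℂ M) else 0))
    (hII : ∀ n m : ℤ, ⁅I n, I m⁆ = 0)
    (v : M)
    (hv : ∀ n : ℤ, 0 < n → L n v = 0 ∧ I n v = 0)
    (hL0 : L 0 v = h • v) (hI0 : I 0 v = 0) :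
    ∀ n : ℤ, 0 < n →
      L n (L (-1) v + (h / c) • I (-1) v) = 0 ∧ I n (L (-1) v + (h / c) • I (-1) v) = 0 := by
  intro n hn
  obtain ⟨hLn, hIn⟩ := hv n hn
  have hLL' : L n (L (-1) v) = ((n : ℂ) + 1) • L (n - 1) v := by
    rw [apply_apply_eq_lie_apply_add, lie_L_L_neg_one hLL, hLn, map_zero, add_zero,
      LinearMap.smul_apply]
  have hLI' : L n (I (-1) v) = I (n - 1) v + if n = 1 then (-(2 * c)) • v else 0 := by
    rw [apply_apply_eq_lie_apply_add, lie_L_I_neg_one hLI, hLn, map_zero, add_zero]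
    split_ifs <;> simp
  have hIL' : I n (L (-1) v) = (n : ℂ) • I (n - 1) v := by
    rw [apply_apply_eq_lie_apply_add, lie_I_L_neg_one hLI, hIn, map_zero, add_zero,
      LinearMap.smul_apply]
  have hII' : I n (I (-1) v) = 0 := by
    rw [apply_apply_eq_lie_apply_add, hII, hIn, map_zero, add_zero,
      LinearMap.zero_apply]
  simp only [map_add, map_smul, hLL', hLI', hIL', hII', smul_zero, add_zero]
  rcases eq_or_ne n 1 with rfl | hn1
  · simp only [sub_self, if_true, hL0, hI0, smul_zero, zero_add, smul_smul, ← add_smul,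
      and_true]
    have hcancel : (((1 : ℤ) : ℂ) + 1) * h + h / c * -(2 * c) = 0 := by
      field_simp
      ring
    rw [hcancel, zero_smul]
  · obtain ⟨hL', hI'⟩ := hv (n - 1) (by omega)
    simp [hL', hI', hn1]
end

section
/- Let M be a module over the W(2,2) Lie algebra on which C_L acts by c_L and C_W by c_W, and let v satisfy L(n)v = W(n)v = 0 for all n > 0, L(0)v = h·v, W(0)v = 0. Then the vector u = W(−1)v satisfies L(n)u = W(n)u = 0 for all n > 0 and L(0)u = (h+1)u, i.e., u is a singular vector; this is the p = 1 case (h_W = 0) of the singular vector u'_p in the W(2,2) Verma module. -/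
/-- Let M be a W(2,2)-module on which C_L acts by c_L and C_W by c_W, and let v be a
highest weight vector with L(0)v = h·v, W(0)v = 0. Then u = W(−1)v is a singular vector:
L(n)u = W(n)u = 0 for all n > 0 and L(0)u = (h+1)·u. -/
theorem w22_singular_vector_p_one
    {M : Type*} [AddCommGroup M] [Module ℂ M]
    (L W : ℤ → Module.End ℂ M) (cL cW h : ℂ)
    (hLL : ∀ n m : ℤ, ⁅L n, L m⁆ =
      ((n - m : ℤ) : ℂ) • L (n + m) +
        (if n = -m then ((((n : ℂ) ^ 3 - (n : ℂ)) / 12) * cL) • (1 : Module.End ℂ M) else 0))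
    (hLW : ∀ n m : ℤ, ⁅L n, W m⁆ =
      ((n - m : ℤ) : ℂ) • W (n + m) +
        (if n = -m then ((((n : ℂ) ^ 3 - (n : ℂ)) / 12) * cW) • (1 : Module.End ℂ M) else 0))
    (hWW : ∀ n m : ℤ, ⁅W n, W m⁆ = 0)
    (v : M)
    (hv : ∀ n : ℤ, 0 < n → L n v = 0 ∧ W n v = 0)
    (hL0 : L 0 v = h • v) (hW0 : W 0 v = 0) :
    (∀ n : ℤ, 0 < n → L n (W (-1) v) = 0 ∧ W n (W (-1) v) = 0) ∧
      L 0 (W (-1) v) = (h + 1) • W (-1) v := by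
  have key : ∀ n : ℤ, L n (W (-1) v) =
      W (-1) (L n v) + ((n + 1 : ℤ) : ℂ) • (W (n - 1) v) +
        (if n = 1 then ((((n : ℂ) ^ 3 - (n : ℂ)) / 12) * cW) • v else 0) := by
    intro n
    have e := hLW n (-1)
    rw [Ring.lie_def, sub_eq_iff_eq_add] at e
    have e2 := congrArg (fun f : Module.End ℂ M => f v) e
    simp only [Module.End.mul_apply, LinearMap.add_apply, LinearMap.smul_apply] at e2
    rw [e2]
    norm_num
    rw [show n + -1 = n - 1 by ring]
    split_ifs with hc
    · simp only [LinearMap.smul_apply, Module.End.one_apply]; abel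
    · simp only [LinearMap.zero_apply]; abel
  refine ⟨fun n hn => ⟨?_, ?_⟩, ?_⟩
  · rw [key n, (hv n hn).1]
    rcases lt_or_eq_of_le (by linarith : (1:ℤ) ≤ n) with h1 | h1
    · rw [(hv (n-1) (by linarith)).2]
      simp [if_neg (by omega : ¬ n = 1)]
    · subst h1
      norm_num [hW0]
  · have e := hWW n (-1)
    rw [Ring.lie_def, sub_eq_zero] at e
    have e2 := congrArg (fun f : Module.End ℂ M => f v) e
    simp only [Module.End.mul_apply] at e2
    rw [e2, (hv n hn).2]
    simp
  · rw [key 0, hL0]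
    simp [add_smul, add_comm]
end

section
/- Let M be an ℋ-module with C_I = 0 and C_{LI} = c ≠ 0, and let v satisfy L(n)v = I(n)v = 0 for n > 0, L(0)v = −(1/2)·v, I(0)v = 0. Then w = (L(−1) + I(−1)/(2c))·(L(−1) − I(−1)/(2c))·v satisfies L(n)w = I(n)w = 0 for all n > 0, i.e., w is a singular vector of weight 3/2. (This is the r = 2, p = 1 case of the product formula for the singular vector v_r⁻ in V^ℋ((1−r)/2, 0).) -/
/-!
If `u` is a highest weight vector of weight `h` on which `I(0)` vanishes, then so is
`L(-1)u + a I(-1)u`, of weight `h + 1`, provided `a c = h`: the only obstruction is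
`L(1)(L(-1)u + a I(-1)u) = (2h - 2ac)u`. Starting from `v` (weight `-1/2`), the factor
`L(-1) - I(-1)/(2c)` is this step with `a = -1/(2c)` and then `L(-1) + I(-1)/(2c)` is the step
with `a = 1/(2c)` at weight `1/2`.
-/

namespace TwistedHeisenbergVirasoro

variable {M : Type*} [AddCommGroup M] [Module ℂ M]

lemma apply_apply_eq_lie_apply_add (f g : Module.End ℂ M) (x : M) :
    f (g x) = ⁅f, g⁆ x + g (f x) := by
  simp [Ring.lie_def]

lemma apply_apply_eq_apply_apply_sub_lie_apply (f g : Module.End ℂ M) (x : M) :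
    f (g x) = g (f x) - ⁅g, f⁆ x := by
  simp [Ring.lie_def]

structure IsModule (L I : ℤ → Module.End ℂ M) (CL : Module.End ℂ M) (c : ℂ) : Prop where
  lie_L_L : ∀ n m : ℤ, ⁅L n, L m⁆ =
    ((n - m : ℤ) : ℂ) • L (n + m) +
      (if n = -m then (((n : ℂ) ^ 3 - (n : ℂ)) / 12) • CL else 0)
  lie_L_I : ∀ n m : ℤ, ⁅L n, I m⁆ =
    (-(m : ℂ)) • I (n + m) +
      (if n = -m then (-(((n : ℂ) ^ 2 + (n : ℂ)) * c)) • (1 : Module.End ℂ M) else 0)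
  lie_I_I : ∀ n m : ℤ, ⁅I n, I m⁆ = 0

structure IsHighestWeightVector (L I : ℤ → Module.End ℂ M) (h : ℂ) (u : M) : Prop where
  L_apply_of_pos : ∀ n : ℤ, 0 < n → L n u = 0
  I_apply_of_nonneg : ∀ n : ℤ, 0 ≤ n → I n u = 0
  L_zero_apply : L 0 u = h • u

variable {L I : ℤ → Module.End ℂ M} {CL : Module.End ℂ M} {c h : ℂ} {u : M}

namespace IsHighestWeightVector

lemma L_apply_L_neg_one (hM : IsModule L I CL c) (hu : IsHighestWeightVector L I h u)
    {n : ℤ} (hn : 0 < n) : L n (L (-1) u) = if n = 1 then (2 * h) • u else 0 := by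
  rw [apply_apply_eq_lie_apply_add, hM.lie_L_L, hu.L_apply_of_pos n hn, map_zero, add_zero]
  obtain rfl | hn1 := (show (1 : ℤ) ≤ n from hn).eq_or_lt
  · norm_num [hu.L_zero_apply, smul_smul]
  · simp [hu.L_apply_of_pos (n + -1) (by omega), show n ≠ 1 by omega]

lemma L_apply_I_neg_one (hM : IsModule L I CL c) (hu : IsHighestWeightVector L I h u)
    {n : ℤ} (hn : 0 < n) : L n (I (-1) u) = if n = 1 then (-(2 * c)) • u else 0 := by
  rw [apply_apply_eq_lie_apply_add, hM.lie_L_I, hu.L_apply_of_pos n hn, map_zero, add_zero]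
  obtain rfl | hn1 := (show (1 : ℤ) ≤ n from hn).eq_or_lt
  · norm_num [hu.I_apply_of_nonneg 0 le_rfl]
  · simp [hu.I_apply_of_nonneg (n + -1) (by omega), show n ≠ 1 by omega]

lemma L_zero_apply_L_neg_one (hM : IsModule L I CL c) (hu : IsHighestWeightVector L I h u) :
    L 0 (L (-1) u) = (h + 1) • L (-1) u := by
  rw [apply_apply_eq_lie_apply_add, hM.lie_L_L, hu.L_zero_apply]
  norm_num
  module

lemma L_zero_apply_I_neg_one (hM : IsModule L I CL c) (hu : IsHighestWeightVector L I h u) :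
    L 0 (I (-1) u) = (h + 1) • I (-1) u := by
  rw [apply_apply_eq_lie_apply_add, hM.lie_L_I, hu.L_zero_apply]
  norm_num
  module

lemma I_apply_L_neg_one (hM : IsModule L I CL c) (hu : IsHighestWeightVector L I h u)
    {n : ℤ} (hn : 0 ≤ n) : I n (L (-1) u) = 0 := by
  rw [apply_apply_eq_apply_apply_sub_lie_apply, hM.lie_L_I, hu.I_apply_of_nonneg n hn, map_zero,
    zero_sub]
  obtain rfl | hn0 := hn.eq_or_lt
  · simp
  · split_ifs <;> simp [hu.I_apply_of_nonneg (-1 + n) (by omega)]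

lemma I_apply_I_neg_one (hM : IsModule L I CL c) (hu : IsHighestWeightVector L I h u)
    {n : ℤ} (hn : 0 ≤ n) : I n (I (-1) u) = 0 := by
  rw [apply_apply_eq_lie_apply_add, hM.lie_I_I, hu.I_apply_of_nonneg n hn, map_zero]
  simp

theorem L_neg_one_add_smul_I_neg_one (hM : IsModule L I CL c)
    (hu : IsHighestWeightVector L I h u) {a : ℂ} (ha : a * c = h) : IsHighestWeightVector L I (h + 1) (L (-1) u + a • I (-1) u) where
  L_apply_of_pos n hn := by
    rw [map_add, map_smul, hu.L_apply_L_neg_one hM hn, hu.L_apply_I_neg_one hM hn]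
    split_ifs
    · rw [smul_smul, ← add_smul, mul_neg, mul_left_comm, ha]; simp
    · simp
  I_apply_of_nonneg n hn := by
    rw [map_add, map_smul, hu.I_apply_L_neg_one hM hn, hu.I_apply_I_neg_one hM hn]; simp
  L_zero_apply := by
    rw [map_add, map_smul, hu.L_zero_apply_L_neg_one hM, hu.L_zero_apply_I_neg_one hM, smul_add,
      smul_comm]

end IsHighestWeightVector

end TwistedHeisenbergVirasoro

/-- Let M be an ℋ-module with C_I acting as 0 and C_{LI} acting as c ≠ 0, and let v be a
highest weight vector with L(0)v = −(1/2)·v, I(0)v = 0. Then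
w = (L(−1) + I(−1)/(2c))(L(−1) − I(−1)/(2c))v is a singular vector:
L(n)w = I(n)w = 0 for all n > 0 (the r = 2, p = 1 case of the product formula). -/
theorem singular_vector_r_two
    {M : Type*} [AddCommGroup M] [Module ℂ M]
    (L I : ℤ → Module.End ℂ M) (CL : Module.End ℂ M) (c : ℂ) (hc : c ≠ 0)
    (hLL : ∀ n m : ℤ, ⁅L n, L m⁆ =
      ((n - m : ℤ) : ℂ) • L (n + m) +
        (if n = -m then (((n : ℂ) ^ 3 - (n : ℂ)) / 12) • CL else 0))
    (hLI : ∀ n m : ℤ, ⁅L n, I m⁆ =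
      (-(m : ℂ)) • I (n + m) +
        (if n = -m then (-(((n : ℂ) ^ 2 + (n : ℂ)) * c)) • (1 : Module.End ℂ M) else 0))
    (hII : ∀ n m : ℤ, ⁅I n, I m⁆ = 0)
    (v : M)
    (hv : ∀ n : ℤ, 0 < n → L n v = 0 ∧ I n v = 0)
    (hL0 : L 0 v = (-(1 / 2) : ℂ) • v) (hI0 : I 0 v = 0) :
    ∀ n : ℤ, 0 < n →
      L n ((L (-1) + (1 / (2 * c)) • I (-1)) ((L (-1) - (1 / (2 * c)) • I (-1)) v)) = 0 ∧
      I n ((L (-1) + (1 / (2 * c)) • I (-1)) ((L (-1) - (1 / (2 * c)) • I (-1)) v)) = 0 := by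
  open TwistedHeisenbergVirasoro in
  have hM : IsModule L I CL c := ⟨hLL, hLI, hII⟩
  have hv₀ : IsHighestWeightVector L I (-(1 / 2)) v :=
    ⟨fun n hn => (hv n hn).1,
      fun n hn => hn.eq_or_lt.elim (fun h => h ▸ hI0) fun h => (hv n h).2, hL0⟩
  have hu := hv₀.L_neg_one_add_smul_I_neg_one hM (a := -(1 / (2 * c))) (by field_simp)
  have hw := hu.L_neg_one_add_smul_I_neg_one hM (a := 1 / (2 * c)) (by field_simp; norm_num)
  have hw_eq : (L (-1) + (1 / (2 * c)) • I (-1)) ((L (-1) - (1 / (2 * c)) • I (-1)) v) =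
      L (-1) (L (-1) v + (-(1 / (2 * c))) • I (-1) v) +
        (1 / (2 * c)) • I (-1) (L (-1) v + (-(1 / (2 * c))) • I (-1) v) := by
    simp [sub_eq_add_neg]
  intro n hn
  rw [hw_eq]
  exact ⟨hw.L_apply_of_pos n hn, hw.I_apply_of_nonneg n hn.le⟩
end

section
/- Suppose x is a vector in an ℋ-module M on which C_I acts as 0 and C_{LI} as c, satisfying L(k)x = I(k)x = 0 for all k > 0, and suppose the operators W(n) are defined on M by W(n) = 2c(−n−1)I(n) + ∑_{i∈ℤ} :I(−i)I(n+i): (a locally finite sum on M). Then W(n)x = 0 for all n > 0. That is, every ℋ-singular vector is W(2,2)-singular under the free field realization. -/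
/-! Each term `I(-i) I(n+i) x` of the normally ordered sum vanishes: if `i ≤ 0` then
`I(-i)` and `I(n+i)` commute and `I(-i)` kills `x` when `i < 0`, while `I(n+i)` kills `x`
when `i ≥ 0`. Hence `W(n) x = 2c(-n-1) I(n) x = 0`. -/

theorem Module.End.apply_apply_eq_zero_of_pos {R M : Type*} [CommSemiring R]
    [AddCommMonoid M] [Module R M] (I : ℤ → Module.End R M)
    (hI : ∀ a b, Commute (I a) (I b)) {x : M} (hx : ∀ k, 0 < k → I k x = 0) {a b : ℤ}
    (hab : 0 < a ∨ 0 < b) : I a (I b x) = 0 := by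
  rcases hab with ha | hb
  · rw [← Module.End.mul_apply, (hI a b).eq, Module.End.mul_apply, hx a ha, map_zero]
  · rw [hx b hb, map_zero]

theorem H_singular_is_W_singular_general
    {M : Type*} [AddCommGroup M] [Module ℂ M]
    (L I W : ℤ → Module.End ℂ M) (c : ℂ)
    (hII : ∀ n m : ℤ, ⁅I n, I m⁆ = 0)
    (hW : ∀ n : ℤ, ∀ m : M, ∀ S : Finset ℤ,
      (∀ i : ℤ, i ∉ S → I (-i) (I (n + i) m) = 0) →
      W n m = (2 * c * (-(n : ℂ) - 1)) • I n m + ∑ i ∈ S, I (-i) (I (n + i) m))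
    (x : M)
    (hx : ∀ k : ℤ, 0 < k → L k x = 0 ∧ I k x = 0) :
    ∀ n : ℤ, 0 < n → W n x = 0 := by
  intro n hn
  have hterm (i : ℤ) : I (-i) (I (n + i) x) = 0 :=
    Module.End.apply_apply_eq_zero_of_pos I (fun a b => commute_iff_lie_eq.mpr (hII a b))
      (fun k hk => (hx k hk).2) (by omega)
  rw [hW n x ∅ fun i _ => hterm i, Finset.sum_empty, (hx n hn).2, smul_zero, add_zero]

/-- Free field realization: let M be a restricted module over the twisted
Heisenberg–Virasoro algebra at level zero (C_I = 0, C_{LI} = c), and suppose the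
operators W(n) are given on M by W(n) = 2c(−n−1)I(n) + ∑_{i∈ℤ} I(−i)I(n+i), the sum
being locally finite (for each vector m, all but finitely many terms vanish, and W(n)m
equals 2c(−n−1)·I(n)m plus the sum of the nonvanishing terms). If x satisfies
L(k)x = I(k)x = 0 for all k > 0, then W(n)x = 0 for all n > 0: every ℋ-singular vector
is W(2,2)-singular. -/
theorem H_singular_is_W_singular
    {M : Type*} [AddCommGroup M] [Module ℂ M]
    (L I W : ℤ → Module.End ℂ M) (CL : Module.End ℂ M) (c : ℂ)
    (hLL : ∀ n m : ℤ, ⁅L n, L m⁆ =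
      ((n - m : ℤ) : ℂ) • L (n + m) +
        (if n = -m then (((n : ℂ) ^ 3 - (n : ℂ)) / 12) • CL else 0))
    (hLI : ∀ n m : ℤ, ⁅L n, I m⁆ =
      (-(m : ℂ)) • I (n + m) +
        (if n = -m then (-(((n : ℂ) ^ 2 + (n : ℂ)) * c)) • (1 : Module.End ℂ M) else 0))
    (hII : ∀ n m : ℤ, ⁅I n, I m⁆ = 0)
    (hres : ∀ m : M, ∃ N : ℤ, ∀ k : ℤ, N ≤ k → I k m = 0 ∧ L k m = 0)
    (hW : ∀ n : ℤ, ∀ m : M, ∀ S : Finset ℤ,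
      (∀ i : ℤ, i ∉ S → I (-i) (I (n + i) m) = 0) →
      W n m = (2 * c * (-(n : ℂ) - 1)) • I n m + ∑ i ∈ S, I (-i) (I (n + i) m))
    (x : M)
    (hx : ∀ k : ℤ, 0 < k → L k x = 0 ∧ I k x = 0) :
    ∀ n : ℤ, 0 < n → W n x = 0 :=
  H_singular_is_W_singular_general L I W c hII hW x hx
end
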